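/- arXiv:1811.12326 — 2 statements merged into one kernel-verified Lean document; each statement's English description precedes it below -/
import Mathlib

section
/- Let λ₁ > λ₂ > ... > λ_N be real numbers with strictly decreasing consecutive gaps λ_k − λ_{k+1}. Then for every i with 2 < i ≤ N, Σ_{j=2}^{i−1} 1/(λ₁ − λ_j)² < Σ_{j=2}^{i−1} 1/(λ_j − λ_i)². -/
open Finset

/-- Key step in the proof of Proposition 2 (0-indexed): for `λ₀ > ⋯ > λ_{N−1}` with
strictly decreasing consecutive gaps, for every `i` with `2 ≤ i < N`,
`Σ_{j=1}^{i−1} (λ₀ − λ_j)⁻² < Σ_{j=1}^{i−1} (λ_j − λ_i)⁻²`. -/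
theorem stmt_9 (N : ℕ) (lam : ℕ → ℝ)
    (hanti : ∀ k, k + 1 < N → lam (k + 1) < lam k)
    (hgap : ∀ k, k + 2 < N → lam (k + 1) - lam (k + 2) < lam k - lam (k + 1)) :
    ∀ i, 2 ≤ i → i < N →
      ∑ j ∈ Finset.Ico 1 i, ((lam 0 - lam j) ^ 2)⁻¹ <
        ∑ j ∈ Finset.Ico 1 i, ((lam j - lam i) ^ 2)⁻¹ := by
  -- strict antitonicity below N
  have hlt : ∀ a b, a < b → b < N → lam b < lam a := by
    intro a b hab hbN
    obtain ⟨c, rfl⟩ : ∃ c, b = a + c + 1 := ⟨b - a - 1, by omega⟩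
    clear hab
    induction c with
    | zero => exact hanti a hbN
    | succ c ih =>
      have h1 : a + c + 1 < N := by omega
      have := hanti (a + c + 1) (by omega)
      have := ih h1
      calc lam (a + (c + 1) + 1) = lam (a + c + 1 + 1) := by ring_nf
        _ < lam (a + c + 1) := hanti (a + c + 1) (by omega)
        _ < lam a := ih h1
  -- gap-sum comparison, shift by one
  have aux2 : ∀ d k, k + d + 2 < N →
      lam (k + 1) - lam (k + 2 + d) < lam k - lam (k + 1 + d) := by
    intro d
    induction d with
    | zero =>
      intro k hk
      have := hgap k (by omega)
      have h1 : k + 2 + 0 = k + 2 := by omega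
      have h2 : k + 1 + 0 = k + 1 := by omega
      rw [h1, h2]; linarith
    | succ d ih =>
      intro k hk
      have h1 := ih k (by omega)
      have h2 := hgap (k + 1 + d) (by omega)
      have e1 : k + 2 + (d + 1) = k + 1 + d + 1 + 1 := by omega
      have e2 : k + 1 + (d + 1) = k + 1 + d + 1 := by omega
      have e3 : k + 2 + d = k + 1 + d + 1 := by omega
      rw [e1, e2]
      rw [e3] at h1
      linarith
  -- iterate: for m, e with m+e+2 < N
  have aux3 : ∀ m e, m + e + 2 < N →
      lam (m + 1) - lam (m + e + 2) < lam 0 - lam (e + 1) := by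
    intro m
    induction m with
    | zero =>
      intro e he
      have := aux2 e 0 (by omega)
      have e1 : 0 + 2 + e = 0 + e + 2 := by omega
      have e2 : 0 + 1 + e = e + 1 := by omega
      rw [e1, e2] at this
      simpa using this
    | succ m ih =>
      intro e he
      have h1 := aux2 e (m + 1) (by omega)
      have h2 := ih e (by omega)
      have e1 : m + 1 + 2 + e = m + 1 + e + 2 := by omega
      have e2 : m + 1 + 1 + e = m + 1 + e + 1 := by omega
      have e3 : m + 1 + 1 = m + 2 := by omega
      have e5 : m + 1 + e + 1 = m + e + 2 := by omega
      have e6 : m + (e + 1) + 2 = m + 1 + e + 2 := by omega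
      rw [e1, e2, e3, e5] at h1
      rw [e3]
      linarith
  intro i hi2 hiN
  have hne : (Finset.Ico 1 i).Nonempty := by
    rw [Finset.nonempty_Ico]; omega
  have key : ∀ j ∈ Finset.Ico 1 i,
      ((lam 0 - lam j) ^ 2)⁻¹ < ((lam (i - j) - lam i) ^ 2)⁻¹ := by
    intro j hj
    rw [Finset.mem_Ico] at hj
    obtain ⟨hj1, hj2⟩ := hj
    have hcmp : lam (i - j) - lam i < lam 0 - lam j := by
      have := aux3 (i - j - 1) (j - 1) (by omega)
      have e1 : i - j - 1 + 1 = i - j := by omega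
      have e2 : i - j - 1 + (j - 1) + 2 = i := by omega
      have e3 : j - 1 + 1 = j := by omega
      rwa [e1, e2, e3] at this
    have hpos : 0 < lam (i - j) - lam i := by
      have := hlt (i - j) i (by omega) hiN
      linarith
    have hsq : (lam (i - j) - lam i) ^ 2 < (lam 0 - lam j) ^ 2 := by
      apply pow_lt_pow_left₀ hcmp (le_of_lt hpos)
      norm_num
    exact inv_strictAnti₀ (by positivity) hsq
  calc ∑ j ∈ Finset.Ico 1 i, ((lam 0 - lam j) ^ 2)⁻¹
      < ∑ j ∈ Finset.Ico 1 i, ((lam (i - j) - lam i) ^ 2)⁻¹ :=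
        Finset.sum_lt_sum_of_nonempty hne key
    _ = ∑ j ∈ Finset.Ico 1 i, ((lam j - lam i) ^ 2)⁻¹ := by
        apply Finset.sum_nbij' (i := fun j => i - j) (j := fun j => i - j) <;>
          intro a ha <;> rw [Finset.mem_Ico] at * <;>
          first
            | omega
            | (congr 3; omega)
end

section
/- Let A ∈ ℝ^{M×N} with largest singular value σ₁ and corresponding right singular vector v. Suppose i attains max_m |v^T a_m| where a_m are the rows of A, all of unit norm. If ã_i = a_i (so a_i is already unit-norm), then the projection residual satisfies ‖A(I − a_i a_i^T)‖_F² ≤ ‖A‖_F² − σ₁²/M. -/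
open Matrix

/-- Residual bound after one IPM step: `A` has unit-norm rows, `(σ₁, u, v)` is a top
singular triple (`uᵀA = σ₁vᵀ`, `‖u‖=‖v‖=1`, `‖Av‖₂ = σ₁`), and row `i` attains
`max_m |vᵀ a_m|`. Then `‖A aᵢ‖₂ ≥ σ₁ |vᵀ aᵢ|`, and consequently the projection
residual satisfies `‖A(I − aᵢ aᵢᵀ)‖_F² ≤ ‖A‖_F² − σ₁⁴/M`. -/
theorem stmt_13 (M N : ℕ) (hM : 0 < M) (A : Matrix (Fin M) (Fin N) ℝ)
    (hrows : ∀ m, ∑ j, A m j ^ 2 = 1)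
    (σ₁ : ℝ) (hσ : 0 ≤ σ₁) (v : Fin N → ℝ) (u : Fin M → ℝ)
    (hv : ∑ j, v j ^ 2 = 1) (hu : ∑ m, u m ^ 2 = 1)
    (huv : Matrix.vecMul u A = σ₁ • v)
    (hAv : ∑ m, (∑ j, A m j * v j) ^ 2 = σ₁ ^ 2)
    (i : Fin M)
    (hmax : ∀ m, |∑ j, v j * A m j| ≤ |∑ j, v j * A i j|) :
    Real.sqrt (∑ m, (∑ j, A m j * A i j) ^ 2) ≥ σ₁ * |∑ j, v j * A i j| ∧
      (∑ m, ∑ j, (A * ((1 : Matrix (Fin N) (Fin N) ℝ)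
          - Matrix.vecMulVec (A i) (A i))) m j ^ 2) ≤
        (∑ m, ∑ j, A m j ^ 2) - σ₁ ^ 4 / M := by
  set w : Fin M → ℝ := fun m => ∑ j, A m j * A i j with hw
  -- u ⬝ w = σ₁ * (v ⬝ aᵢ)
  have hcol : ∀ j, ∑ m, u m * A m j = σ₁ * v j := by
    intro j
    have := congrFun huv j
    simpa [Matrix.vecMul, dotProduct, Pi.smul_apply, smul_eq_mul] using this
  have huw : ∑ m, u m * w m = σ₁ * ∑ j, v j * A i j := by
    calc ∑ m, u m * w m = ∑ m, ∑ j, u m * A m j * A i j := by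
          simp [hw, Finset.mul_sum, mul_assoc]
      _ = ∑ j, (∑ m, u m * A m j) * A i j := by
          rw [Finset.sum_comm]; simp [Finset.sum_mul]
      _ = σ₁ * ∑ j, v j * A i j := by
          simp [hcol, Finset.mul_sum, mul_assoc]
  -- Cauchy-Schwarz
  have hcs : (∑ m, u m * w m) ^ 2 ≤ (∑ m, u m ^ 2) * ∑ m, w m ^ 2 :=
    Finset.sum_mul_sq_le_sq_mul_sq Finset.univ u w
  have key1 : (σ₁ * ∑ j, v j * A i j) ^ 2 ≤ ∑ m, w m ^ 2 := by
    rw [← huw]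
    calc (∑ m, u m * w m) ^ 2 ≤ (∑ m, u m ^ 2) * ∑ m, w m ^ 2 := hcs
      _ = ∑ m, w m ^ 2 := by rw [hu, one_mul]
  have part1 : Real.sqrt (∑ m, w m ^ 2) ≥ σ₁ * |∑ j, v j * A i j| := by
    have h1 : σ₁ * |∑ j, v j * A i j| = |σ₁ * ∑ j, v j * A i j| := by
      rw [abs_mul, abs_of_nonneg hσ]
    rw [h1, ← Real.sqrt_sq_eq_abs]
    exact Real.sqrt_le_sqrt key1
  refine ⟨part1, ?_⟩
  -- entries of the residual matrix
  have hB : ∀ m j, (A * ((1 : Matrix (Fin N) (Fin N) ℝ)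
      - Matrix.vecMulVec (A i) (A i))) m j = A m j - w m * A i j := by
    intro m j
    simp [Matrix.mul_apply, Matrix.sub_apply, Matrix.one_apply,
      Matrix.vecMulVec_apply, mul_sub, Finset.sum_sub_distrib, hw,
      Finset.sum_mul, mul_ite, mul_assoc, Finset.mul_sum]
  have hrow : ∀ m, ∑ j, (A m j - w m * A i j) ^ 2 = 1 - w m ^ 2 := by
    intro m
    have e : ∀ j, (A m j - w m * A i j) ^ 2
        = A m j ^ 2 - 2 * w m * (A m j * A i j) + w m ^ 2 * A i j ^ 2 := by
      intro j; ring
    simp only [e, Finset.sum_add_distrib, Finset.sum_sub_distrib,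
      ← Finset.mul_sum, hrows, ← hw]
    ring
  have hLHS : (∑ m, ∑ j, (A * ((1 : Matrix (Fin N) (Fin N) ℝ)
      - Matrix.vecMulVec (A i) (A i))) m j ^ 2) = M - ∑ m, w m ^ 2 := by
    simp only [hB, hrow, Finset.sum_sub_distrib, Finset.sum_const,
      Finset.card_univ, Fintype.card_fin, nsmul_eq_mul, mul_one]
  have hRHS : (∑ m, ∑ j, A m j ^ 2) = (M : ℝ) := by
    simp [hrows]
  rw [hLHS, hRHS]
  have hMpos : (0 : ℝ) < M := by exact_mod_cast hM
  -- σ₁² ≤ M * (v⬝aᵢ)²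
  have hσsq : σ₁ ^ 2 ≤ M * (∑ j, v j * A i j) ^ 2 := by
    rw [← hAv]
    calc ∑ m, (∑ j, A m j * v j) ^ 2
        ≤ ∑ m : Fin M, (∑ j, v j * A i j) ^ 2 := by
          refine Finset.sum_le_sum fun m _ => ?_
          have h := hmax m
          have h2 : |∑ j, A m j * v j| ≤ |∑ j, v j * A i j| := by
            simpa [mul_comm] using h
          calc (∑ j, A m j * v j) ^ 2 = |∑ j, A m j * v j| ^ 2 := (sq_abs _).symm
            _ ≤ |∑ j, v j * A i j| ^ 2 := by
                exact pow_le_pow_left₀ (abs_nonneg _) h2 2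
            _ = (∑ j, v j * A i j) ^ 2 := sq_abs _
      _ = M * (∑ j, v j * A i j) ^ 2 := by
          simp [Finset.sum_const, Finset.card_univ, mul_comm]
  have hfinal : σ₁ ^ 4 / M ≤ ∑ m, w m ^ 2 := by
    have h3 : σ₁ ^ 4 / M ≤ σ₁ ^ 2 * (∑ j, v j * A i j) ^ 2 := by
      rw [div_le_iff₀ hMpos]
      calc σ₁ ^ 4 = σ₁ ^ 2 * σ₁ ^ 2 := by ring
        _ ≤ σ₁ ^ 2 * (M * (∑ j, v j * A i j) ^ 2) := by
            exact mul_le_mul_of_nonneg_left hσsq (sq_nonneg _)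
        _ = σ₁ ^ 2 * (∑ j, v j * A i j) ^ 2 * M := by ring
    calc σ₁ ^ 4 / M ≤ σ₁ ^ 2 * (∑ j, v j * A i j) ^ 2 := h3
      _ = (σ₁ * ∑ j, v j * A i j) ^ 2 := by ring
      _ ≤ ∑ m, w m ^ 2 := key1
  linarith
end
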